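/- arXiv:1705.01070 — 2 statements merged into one kernel-verified Lean document; each statement's English description precedes it below -/
import Mathlib

section
/- For all λ > 0 and μ > 0, the Perron–Frobenius hazard rate k₁ = ( (3λ+μ) − √((3λ+μ)² − 8λ²) ) / 2 is strictly greater than the renewal-process hazard rate 2λ²/(3λ+μ). -/
/-!
`k₁` is the smaller root of `x² - s x + p` with `s = 3λ + μ` and `p = 2λ²`. Its product with the
larger root `k₂` is `p`, and `k₂ < k₁ + k₂ = s` because `k₁ > 0`; hence `p / s < p / k₂ = k₁`.
-/

open Real

namespace Quadratic

variable {s p : ℝ}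

theorem smallerRoot_mul_largerRoot (hdisc : 4 * p ≤ s ^ 2) :
    (s - √(s ^ 2 - 4 * p)) / 2 * ((s + √(s ^ 2 - 4 * p)) / 2) = p := by
  have hsq : √(s ^ 2 - 4 * p) ^ 2 = s ^ 2 - 4 * p := sq_sqrt (by linarith)
  linear_combination (-1 / 4 : ℝ) * hsq

theorem sqrt_discrim_lt (hp : 0 < p) (hs : 0 < s) : √(s ^ 2 - 4 * p) < s :=
  (sqrt_lt' hs).2 (by linarith)

theorem div_lt_smallerRoot (hp : 0 < p) (hs : 0 < s) (hdisc : 4 * p ≤ s ^ 2) :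
    p / s < (s - √(s ^ 2 - 4 * p)) / 2 := by
  have hd := sqrt_discrim_lt hp hs
  have hsmall : 0 < (s - √(s ^ 2 - 4 * p)) / 2 := by linarith
  have hlarge_pos : 0 < (s + √(s ^ 2 - 4 * p)) / 2 := by positivity
  have hlarge_lt : (s + √(s ^ 2 - 4 * p)) / 2 < s := by linarith
  calc p / s
      = (s - √(s ^ 2 - 4 * p)) / 2 * ((s + √(s ^ 2 - 4 * p)) / 2) / s := by
        rw [smallerRoot_mul_largerRoot hdisc]
    _ < (s - √(s ^ 2 - 4 * p)) / 2 := by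
        rw [div_lt_iff₀ hs]
        exact mul_lt_mul_of_pos_left hlarge_lt hsmall

end Quadratic

/-- For `λ, μ > 0`, the Perron–Frobenius hazard rate
`k₁ = ((3λ+μ) − √((3λ+μ)² − 8λ²))/2` is strictly greater than the
renewal-process hazard rate `2λ²/(3λ+μ)`. -/
theorem pf_hazard_gt_renewal_hazard (l m : ℝ) (hl : 0 < l) (hm : 0 < m) :
    2 * l ^ 2 / (3 * l + m)
      < ((3 * l + m) - Real.sqrt ((3 * l + m) ^ 2 - 8 * l ^ 2)) / 2 := by
  have hdisc : 4 * (2 * l ^ 2) ≤ (3 * l + m) ^ 2 := by nlinarith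
  have h := Quadratic.div_lt_smallerRoot (by positivity) (by positivity) hdisc
  rwa [← mul_assoc, show (4 : ℝ) * 2 = 8 by norm_num] at h
end

section
/- Let Q be a real n×n generator matrix (columns sum to zero, off-diagonal entries nonnegative) such that state i has a single outflow: there is exactly one index j₀ ≠ i with Q_{j₀,i} = μ > 0, Q_{l,i} = 0 for all l ∉ {i, j₀}, and Q_{i,i} = −μ. Let P be a steady-state probability vector: Q·P = 0, all P_l > 0, ∑_l P_l = 1. Let μ′ > 0 and let Q′ be the matrix obtained from Q by replacing μ with μ′ (i.e., Q′_{j₀,i} = μ′, Q′_{i,i} = −μ′, all other entries unchanged). Then the vector P′ defined by P′_l = c·P_l for l ≠ i and P′_i = c·(μ/μ′)·P_i, where c = 1/(1 − P_i + (μ/μ′)P_i), is a steady-state probability vector of Q′; consequently, for every l ≠ i the conditional probability P′_l/(1 − P′_i) equals P_l/(1 − P_i). That is, the intensity of the single outflow from state i does not impact the conditional probabilities of all other states given that the system is not in state i. -/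
/-!
Column `i` of `Q'` is column `i` of `Q` multiplied by `μ' / μ`, so `Q' *ᵥ P'` equals `c • Q *ᵥ P = 0`
once the `i`-th coordinate of `P` is divided by the same factor. Reweighting the single coordinate `i`
and renormalizing multiplies all other coordinates, and hence `1 - P i`, by the same constant `c`,
so the conditional probabilities given "not in state `i`" do not change.
-/

open Matrix Finset

theorem mulVec_eq_smul_mulVec_of_mul_eq {m n R : Type*} [Fintype n] [CommSemiring R]
    {A B : Matrix m n R} {v w : n → R} {c : R} (h : ∀ r l, B r l * w l = c * (A r l * v l)) :
    B *ᵥ w = c • A *ᵥ v := by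
  ext r
  simp only [mulVec, dotProduct, Pi.smul_apply, smul_eq_mul, mul_sum, h]

section Reweight

variable {ι : Type*} [DecidableEq ι] {P P' : ι → ℝ} {i : ι} {t c : ℝ}

theorem reweight_pos (ht : 0 < t) (hc : 0 < c) (hP : ∀ l, 0 < P l)
    (hP' : ∀ l, P' l = if l = i then c * t * P i else c * P l) (l : ι) : 0 < P' l := by
  rw [hP']
  split_ifs
  · exact mul_pos (mul_pos hc ht) (hP i)
  · exact mul_pos hc (hP l)

theorem sum_reweight_eq_one [Fintype ι] (hPsum : ∑ l, P l = 1) (hcD : c * (1 - P i + t * P i) = 1)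
    (hP' : ∀ l, P' l = if l = i then c * t * P i else c * P l) : ∑ l, P' l = 1 := by
  calc ∑ l, P' l = ∑ l, (c * P l + if l = i then c * (t - 1) * P i else 0) := by
        refine sum_congr rfl fun l _ => ?_
        rw [hP']
        split_ifs with hl
        · rw [hl]; ring
        · ring
    _ = c * (1 - P i + t * P i) := by
        rw [sum_add_distrib, ← mul_sum, sum_ite_eq', if_pos (mem_univ i), hPsum]
        ring
    _ = 1 := hcD

theorem reweight_one_sub_self (hcD : c * (1 - P i + t * P i) = 1)
    (hP' : ∀ l, P' l = if l = i then c * t * P i else c * P l) :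
    1 - P' i = c * (1 - P i) := by
  rw [hP', if_pos rfl]
  linear_combination -hcD

theorem reweight_div_one_sub (hcD : c * (1 - P i + t * P i) = 1)
    (hP' : ∀ l, P' l = if l = i then c * t * P i else c * P l) {l : ι} (hl : l ≠ i) :
    P' l / (1 - P' i) = P l / (1 - P i) := by
  have hc : c ≠ 0 := left_ne_zero_of_mul_eq_one hcD
  rw [reweight_one_sub_self hcD hP', hP', if_neg hl, mul_div_mul_left _ _ hc]

end Reweight

theorem single_outflow_column_eq {ι K : Type*} [DecidableEq ι] [Field K] {Q Q' : Matrix ι ι K}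
    {i j₀ : ι} {μ μ' : K} (hμ : μ ≠ 0) (hQj₀i : Q j₀ i = μ) (hQii : Q i i = -μ)
    (hsingle : ∀ l, l ≠ i → l ≠ j₀ → Q l i = 0)
    (hQ' : ∀ r c, Q' r c =
      if c = i then (if r = j₀ then μ' else if r = i then -μ' else Q r c) else Q r c)
    (r : ι) : Q' r i = μ' / μ * Q r i := by
  rw [hQ', if_pos rfl]
  by_cases hr : r = j₀
  · rw [if_pos hr, hr, hQj₀i]; field_simp
  by_cases hri : r = i
  · rw [if_neg hr, if_pos hri, hri, hQii]; field_simp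
  · rw [if_neg hr, if_neg hri, hsingle r hri hr, mul_zero]

theorem single_outflow_intensity_irrelevant_general (n : ℕ)
    (Q : Matrix (Fin n) (Fin n) ℝ)
    (i j₀ : Fin n)
    (μ μ' : ℝ) (hμ : 0 < μ) (hμ' : 0 < μ')
    (hQj₀i : Q j₀ i = μ) (hQii : Q i i = -μ)
    (hsingle : ∀ l : Fin n, l ≠ i → l ≠ j₀ → Q l i = 0)
    (P : Fin n → ℝ) (hP : Q.mulVec P = 0)
    (hPpos : ∀ l, 0 < P l) (hPsum : ∑ l, P l = 1)
    (Q' : Matrix (Fin n) (Fin n) ℝ)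
    (hQ' : ∀ r c : Fin n, Q' r c =
      if c = i then (if r = j₀ then μ' else if r = i then -μ' else Q r c) else Q r c)
    (c : ℝ) (hc : c = 1 / (1 - P i + (μ / μ') * P i))
    (P' : Fin n → ℝ)
    (hP' : ∀ l : Fin n, P' l = if l = i then c * (μ / μ') * P i else c * P l) :
    Q'.mulVec P' = 0 ∧ (∀ l, 0 < P' l) ∧ (∑ l, P' l = 1) ∧
      ∀ l : Fin n, l ≠ i → P' l / (1 - P' i) = P l / (1 - P i) := by
  have hPi_le : P i ≤ 1 :=
    hPsum ▸ single_le_sum (fun l _ => (hPpos l).le) (mem_univ i)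
  have hD : 0 < 1 - P i + μ / μ' * P i := by nlinarith [div_pos hμ hμ', hPpos i]
  have hcD : c * (1 - P i + μ / μ' * P i) = 1 := by rw [hc, one_div, inv_mul_cancel₀ hD.ne']
  have hentry : ∀ r l, Q' r l * P' l = c * (Q r l * P l) := by
    intro r l
    rw [hP']
    by_cases hl : l = i
    · rw [if_pos hl, hl, single_outflow_column_eq hμ.ne' hQj₀i hQii hsingle hQ']
      field_simp
    · rw [if_neg hl, hQ', if_neg hl]
      ring
  refine ⟨?_, reweight_pos (div_pos hμ hμ') (by rw [hc]; positivity) hPpos hP',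
    sum_reweight_eq_one hPsum hcD hP', fun l hl => reweight_div_one_sub hcD hP' hl⟩
  rw [mulVec_eq_smul_mulVec_of_mul_eq hentry, hP, smul_zero]

/-- Lemma 3: in a steady state, if state `i` has a single outflow (to `j₀`,
with intensity `μ`), replacing `μ` by `μ'` yields a steady-state vector whose
components merely rescale `P i` and renormalize; consequently, the conditional
probabilities of all other states given `X ≠ Sᵢ` are unchanged. -/
theorem single_outflow_intensity_irrelevant (n : ℕ)
    (Q : Matrix (Fin n) (Fin n) ℝ)
    (hcol : ∀ c : Fin n, ∑ r, Q r c = 0)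
    (hoff : ∀ r c : Fin n, r ≠ c → 0 ≤ Q r c)
    (i j₀ : Fin n) (hj₀ : j₀ ≠ i)
    (μ μ' : ℝ) (hμ : 0 < μ) (hμ' : 0 < μ')
    (hQj₀i : Q j₀ i = μ) (hQii : Q i i = -μ)
    (hsingle : ∀ l : Fin n, l ≠ i → l ≠ j₀ → Q l i = 0)
    (P : Fin n → ℝ) (hP : Q.mulVec P = 0)
    (hPpos : ∀ l, 0 < P l) (hPsum : ∑ l, P l = 1)
    (Q' : Matrix (Fin n) (Fin n) ℝ)
    (hQ' : ∀ r c : Fin n, Q' r c =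
      if c = i then (if r = j₀ then μ' else if r = i then -μ' else Q r c) else Q r c)
    (c : ℝ) (hc : c = 1 / (1 - P i + (μ / μ') * P i))
    (P' : Fin n → ℝ)
    (hP' : ∀ l : Fin n, P' l = if l = i then c * (μ / μ') * P i else c * P l) :
    Q'.mulVec P' = 0 ∧ (∀ l, 0 < P' l) ∧ (∑ l, P' l = 1) ∧
      ∀ l : Fin n, l ≠ i → P' l / (1 - P' i) = P l / (1 - P i) :=
  single_outflow_intensity_irrelevant_general n Q i j₀ μ μ' hμ hμ' hQj₀i hQii hsingle P hP hPpos
    hPsum Q' hQ' c hc P' hP'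
end
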